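/- arXiv:2511.00244 — 3 statements merged into one kernel-verified Lean document; each statement's English description precedes it below -/
import Mathlib

section
/- The hyperbolic area of a Saccheri quadrilateral with base of hyperbolic length a and the two equal perpendicular sides of hyperbolic length b equals a·sinh(b). -/
open scoped Real

/-- The hyperbolic area of a Saccheri quadrilateral with base of hyperbolic length `a`
and equal perpendicular sides of hyperbolic length `b` equals `a·sinh b`.
In the upper half-plane model, the quadrilateral `PQRS` (with `P = (0,e^a)`, `Q = (0,1)`,
`R` on the unit circle and `S` on the circle of radius `e^a`, both on the ray at angle `θ`
from the imaginary axis) has hyperbolic area `∫₀^θ ∫₁^{e^a} (1/(r² cos² x)) r dr dx`,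
where the side length is `b = ∫₀^θ sec x dx`. -/
theorem saccheri_area (a θ b : ℝ) (ha : 0 < a) (hθ : θ ∈ Set.Ioo 0 (π / 2))
    (hb : b = ∫ x in (0:ℝ)..θ, 1 / Real.cos x) :
    (∫ x in (0:ℝ)..θ, ∫ r in (1:ℝ)..Real.exp a, (1 / (r ^ 2 * Real.cos x ^ 2)) * r) =
      a * Real.sinh b := by
  obtain ⟨hθ0, hθ2⟩ := hθ
  have hcos : ∀ x ∈ Set.Icc (0:ℝ) θ, 0 < Real.cos x := fun x hx =>
    Real.cos_pos_of_mem_Ioo ⟨by linarith [hx.1, Real.pi_pos], lt_of_le_of_lt hx.2 hθ2⟩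
  have huIcc : Set.uIcc (0:ℝ) θ = Set.Icc 0 θ := Set.uIcc_of_le hθ0.le
  have hexp : (1:ℝ) ≤ Real.exp a := Real.one_le_exp ha.le
  -- inner integral
  have hinner : ∀ x ∈ Set.Icc (0:ℝ) θ,
      (∫ r in (1:ℝ)..Real.exp a, (1 / (r ^ 2 * Real.cos x ^ 2)) * r)
        = a * (1 / Real.cos x ^ 2) := by
    intro x hx
    have hc := (hcos x hx).ne'
    have : (∫ r in (1:ℝ)..Real.exp a, (1 / (r ^ 2 * Real.cos x ^ 2)) * r)
        = ∫ r in (1:ℝ)..Real.exp a, (1 / Real.cos x ^ 2) * (1 / r) := by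
      apply intervalIntegral.integral_congr
      intro r hr
      rw [Set.uIcc_of_le hexp] at hr
      have hr0 : r ≠ 0 := by nlinarith [hr.1]
      field_simp
    rw [this, intervalIntegral.integral_const_mul, integral_one_div (by
      rw [Set.uIcc_of_le hexp]; intro h; exact absurd h.1 (by norm_num))]
    simp [Real.log_exp]; ring
  have hstep : (∫ x in (0:ℝ)..θ, ∫ r in (1:ℝ)..Real.exp a, (1 / (r ^ 2 * Real.cos x ^ 2)) * r)
      = ∫ x in (0:ℝ)..θ, a * (1 / Real.cos x ^ 2) := by
    apply intervalIntegral.integral_congr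
    intro x hx; rw [huIcc] at hx; exact hinner x hx
  rw [hstep]
  -- outer integral = a * tan θ
  have hcont : ContinuousOn (fun x => a * (1 / Real.cos x ^ 2)) (Set.Icc 0 θ) := by
    apply ContinuousOn.mul continuousOn_const
    apply ContinuousOn.div continuousOn_const
    · exact (Real.continuous_cos.continuousOn.pow 2)
    · intro x hx; exact pow_ne_zero 2 (hcos x hx).ne'
  have htan : (∫ x in (0:ℝ)..θ, a * (1 / Real.cos x ^ 2)) = a * Real.tan θ := by
    have := intervalIntegral.integral_eq_sub_of_hasDerivAt
      (f := fun x => a * Real.tan x)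
      (f' := fun x => a * (1 / Real.cos x ^ 2))
      (a := 0) (b := θ) ?_ ?_
    · rw [this]; simp [Real.tan_zero]
    · intro x hx; rw [huIcc] at hx
      exact (Real.hasDerivAt_tan (hcos x hx).ne').const_mul a
    · apply ContinuousOn.intervalIntegrable; rw [huIcc]; exact hcont
  rw [htan]
  -- b = arsinh (tan θ)
  have hsqrt : ∀ x ∈ Set.Icc (0:ℝ) θ, Real.sqrt (1 + Real.tan x ^ 2) = (Real.cos x)⁻¹ := by
    intro x hx
    have hc := hcos x hx
    rw [show (1 + Real.tan x ^ 2) = ((Real.cos x)⁻¹)^2 by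
      rw [Real.tan_eq_sin_div_cos]; field_simp; exact Real.cos_sq_add_sin_sq x]
    exact Real.sqrt_sq (by positivity)
  have hbeq : b = Real.arsinh (Real.tan θ) := by
    rw [hb]
    have := intervalIntegral.integral_eq_sub_of_hasDerivAt
      (f := fun x => Real.arsinh (Real.tan x))
      (f' := fun x => 1 / Real.cos x)
      (a := 0) (b := θ) ?_ ?_
    · rw [this]; simp [Real.tan_zero, Real.arsinh_zero]
    · intro x hx; rw [huIcc] at hx
      have h1 := (Real.hasDerivAt_arsinh (Real.tan x)).comp x
        (Real.hasDerivAt_tan (hcos x hx).ne')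
      have : (Real.sqrt (1 + Real.tan x ^ 2))⁻¹ * (1 / Real.cos x ^ 2) = 1 / Real.cos x := by
        rw [hsqrt x hx]
        have hc := (hcos x hx).ne'
        field_simp
      rwa [this] at h1
    · apply ContinuousOn.intervalIntegrable; rw [huIcc]
      apply ContinuousOn.div continuousOn_const Real.continuous_cos.continuousOn
      intro x hx; exact (hcos x hx).ne'
  rw [hbeq, Real.sinh_arsinh]
end

section
/- Given three points x_i, x_j, x_k in H^m and positive reals ρ_i, ρ_j, ρ_k with ρ_i⟨x_i,y⟩_H = ρ_j⟨x_j,y⟩_H = ρ_k⟨x_k,y⟩_H and ρ_i cosh d_is = ρ_j cosh d_js where d_is, d_js are hyperbolic distances from x_i, x_j to a point q on the geodesic between them, the identity e^{2φ_i}|e^{-φ_i}x_i - e^{-φ_j}x_j|² = cosh²(d_is)(tanh d_is + tanh d_js)² holds, where the norm is taken with respect to the Lorentzian inner product, φ_i = -ln ρ_i, and ⟨x_i, x_j⟩_H = -cosh(d_is + d_js). -/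
/-!
Since `exp (-φ) = ρ`, the left side is `ρi⁻² ⟨ρi xi - ρj xj, ρi xi - ρj xj⟩_H
= -1 + 2 r cosh (dis + djs) - r²` with `r = ρj / ρi = cosh dis / cosh djs`. Both this and
`cosh² dis (tanh dis + tanh djs)²` equal `sinh² (dis + djs) / cosh² djs`.
-/

def lorentz (m : ℕ) (x y : Fin (m + 1) → ℝ) : ℝ :=
  (∑ i : Fin m, x i.castSucc * y i.castSucc) - x (Fin.last m) * y (Fin.last m)

def Hyperboloid (m : ℕ) : Set (Fin (m + 1) → ℝ) :=
  {x | lorentz m x x = -1 ∧ 0 < x (Fin.last m)}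

lemma lorentz_mul_sub_mul_self {m : ℕ} (a b : ℝ) (x y : Fin (m + 1) → ℝ) :
    lorentz m (fun k => a * x k - b * y k) (fun k => a * x k - b * y k)
      = a ^ 2 * lorentz m x x - 2 * a * b * lorentz m x y + b ^ 2 * lorentz m y y := by
  have expand : ∀ k : Fin (m + 1),
      (a * x k - b * y k) * (a * x k - b * y k)
        = a ^ 2 * (x k * x k) - 2 * a * b * (x k * y k) + b ^ 2 * (y k * y k) := by
    intro k; ring
  simp only [lorentz, expand, Finset.sum_add_distrib, Finset.sum_sub_distrib, ← Finset.mul_sum]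
  ring

namespace Real

lemma sinh_add_sq (a b : ℝ) :
    sinh (a + b) ^ 2 = 2 * cosh a * cosh b * cosh (a + b) - cosh a ^ 2 - cosh b ^ 2 := by
  rw [sinh_add, cosh_add]
  linear_combination -(cosh b ^ 2) * cosh_sq_sub_sinh_sq a - (cosh a ^ 2) * cosh_sq_sub_sinh_sq b

lemma cosh_sq_mul_tanh_add_tanh_sq (a b : ℝ) :
    cosh a ^ 2 * (tanh a + tanh b) ^ 2 = sinh (a + b) ^ 2 / cosh b ^ 2 := by
  rw [tanh_eq_sinh_div_cosh, tanh_eq_sinh_div_cosh, sinh_add]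
  field_simp [(cosh_pos a).ne', (cosh_pos b).ne']

lemma exp_two_mul_neg_log {ρ : ℝ} (hρ : 0 < ρ) : exp (2 * -log ρ) = (ρ ^ 2)⁻¹ := by
  rw [two_mul, exp_add, exp_neg, exp_log hρ, sq, mul_inv]

end Real

theorem lorentz_norm_identity_general {m : ℕ} (xi xj : Fin (m + 1) → ℝ)
    (hxi : xi ∈ Hyperboloid m) (hxj : xj ∈ Hyperboloid m)
    (ρi ρj : ℝ) (hρi : 0 < ρi) (hρj : 0 < ρj)
    (dis djs : ℝ)
    (hpow : ρi * Real.cosh dis = ρj * Real.cosh djs)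
    (φi φj : ℝ) (hφi : φi = -Real.log ρi) (hφj : φj = -Real.log ρj)
    (hd : lorentz m xi xj = -Real.cosh (dis + djs)) :
    Real.exp (2 * φi) *
        lorentz m (fun k => Real.exp (-φi) * xi k - Real.exp (-φj) * xj k)
          (fun k => Real.exp (-φi) * xi k - Real.exp (-φj) * xj k) =
      Real.cosh dis ^ 2 * (Real.tanh dis + Real.tanh djs) ^ 2 := by
  subst hφi hφj
  rw [Real.exp_two_mul_neg_log hρi, neg_neg, neg_neg, Real.exp_log hρi, Real.exp_log hρj,
    lorentz_mul_sub_mul_self, hxi.1, hxj.1, hd, Real.cosh_sq_mul_tanh_add_tanh_sq]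
  have hcosh : Real.cosh djs ≠ 0 := (Real.cosh_pos djs).ne'
  have hratio : ρj = ρi * Real.cosh dis / Real.cosh djs := by
    rw [eq_div_iff hcosh, hpow]
  rw [hratio]
  field_simp
  rw [Real.sinh_add_sq]
  ring

/-- The key identity `e^{2φ_i}|e^{-φ_i}x_i - e^{-φ_j}x_j|² = cosh²(d_is)(tanh d_is + tanh d_js)²`
for the Hessian of the Kantorovich functional, where the squared norm is taken with respect
to the Lorentzian inner product. -/
theorem lorentz_norm_identity {m : ℕ} (xi xj xk y : Fin (m + 1) → ℝ)
    (hxi : xi ∈ Hyperboloid m) (hxj : xj ∈ Hyperboloid m) (hxk : xk ∈ Hyperboloid m)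
    (ρi ρj ρk : ℝ) (hρi : 0 < ρi) (hρj : 0 < ρj) (hρk : 0 < ρk)
    (hyij : ρi * lorentz m xi y = ρj * lorentz m xj y)
    (hyjk : ρj * lorentz m xj y = ρk * lorentz m xk y)
    (dis djs : ℝ) (hdis : 0 ≤ dis) (hdjs : 0 ≤ djs)
    (hpow : ρi * Real.cosh dis = ρj * Real.cosh djs)
    (φi φj : ℝ) (hφi : φi = -Real.log ρi) (hφj : φj = -Real.log ρj)
    (hd : lorentz m xi xj = -Real.cosh (dis + djs)) :
    Real.exp (2 * φi) *
        lorentz m (fun k => Real.exp (-φi) * xi k - Real.exp (-φj) * xj k)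
          (fun k => Real.exp (-φi) * xi k - Real.exp (-φj) * xj k) =
      Real.cosh dis ^ 2 * (Real.tanh dis + Real.tanh djs) ^ 2 :=
  lorentz_norm_identity_general xi xj hxi hxj ρi ρj hρi hρj dis djs hpow φi φj hφi hφj hd
end

section
/- Let W_1,...,W_k be a measurable partition of a measure space (M,μ), let c: {1,...,k} × M → ℝ be a cost and φ ∈ ℝ^k such that for all x ∈ W_i and all j, c(i,x) - φ_i ≤ c(j,x) - φ_j. Then for any other measurable partition X_1,...,X_k of M with μ(X_i) = μ(W_i) for all i, we have Σ_i ∫_{W_i} c(i,x) dμ ≤ Σ_j ∫_{X_j} c(j,x) dμ. -/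
/-!
The minimum `ψ x = min_j (c j x - φ j)` of the shifted costs (the `c`-transform of `φ`) lies below
`c j - φ j` everywhere and equals `c i - φ i` on the Laguerre cell `W i`. Hence, for any
partition `X`, `∑ j ∫_{X j} (c j - φ j) ≥ ∫ ψ = ∑ i ∫_{W i} (c i - φ i)`, and the shifts
contribute `∑ j φ j μ (X j) = ∑ i φ i μ (W i)` to both sides.
-/

open MeasureTheory Set Function

theorem setIntegral_sub_const {M : Type*} [MeasurableSpace M] {μ : Measure M} {s : Set M}
    {f : M → ℝ} (hf : IntegrableOn f s μ) (hs : μ s ≠ ⊤) (a : ℝ) :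
    ∫ x in s, (f x - a) ∂μ = ∫ x in s, f x ∂μ - μ.real s * a := by
  rw [integral_sub hf (integrableOn_const hs), setIntegral_const, smul_eq_mul]

section cTransform

variable {ι M : Type*}

noncomputable def cTransform (c : ι → M → ℝ) (φ : ι → ℝ) (x : M) : ℝ :=
  ⨅ j, (c j x - φ j)

variable [Finite ι] {c : ι → M → ℝ} {φ : ι → ℝ}

theorem cTransform_le (x : M) (j : ι) : cTransform c φ x ≤ c j x - φ j :=
  ciInf_le (Finite.bddBelow_range _) j

theorem cTransform_eq_of_forall_le {x : M} {i : ι} (h : ∀ j, c i x - φ i ≤ c j x - φ j) :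
    cTransform c φ x = c i x - φ i :=
  have : Nonempty ι := ⟨i⟩
  (cTransform_le x i).antisymm (le_ciInf h)

end cTransform

structure IsMeasurablePartition {ι M : Type*} [MeasurableSpace M] (W : ι → Set M) : Prop where
  measurableSet : ∀ i, MeasurableSet (W i)
  pairwise_disjoint : Pairwise (Disjoint on W)
  iUnion_eq_univ : ⋃ i, W i = univ

namespace IsMeasurablePartition

variable {ι M : Type*} [MeasurableSpace M] [Fintype ι] {μ : Measure M} {W : ι → Set M}

theorem integrable_of_forall_integrableOn {E : Type*} [NormedAddCommGroup E]
    (hW : IsMeasurablePartition W) {f : M → E} (hf : ∀ i, IntegrableOn f (W i) μ) :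
    Integrable f μ := by
  rw [← integrableOn_univ, ← hW.iUnion_eq_univ]
  exact integrableOn_finite_iUnion.2 hf

theorem sum_setIntegral_eq_integral {E : Type*} [NormedAddCommGroup E] [NormedSpace ℝ E]
    (hW : IsMeasurablePartition W) {f : M → E} (hf : Integrable f μ) :
    ∑ i, ∫ x in W i, f x ∂μ = ∫ x, f x ∂μ := by
  rw [← integral_iUnion_fintype hW.measurableSet hW.pairwise_disjoint fun _ => hf.integrableOn,
    hW.iUnion_eq_univ, setIntegral_univ]

variable {c : ι → M → ℝ} {φ : ι → ℝ}

theorem integrable_cTransform (hW : IsMeasurablePartition W)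
    (hmin : ∀ i, ∀ x ∈ W i, ∀ j, c i x - φ i ≤ c j x - φ j)
    (hc : ∀ i, IntegrableOn (fun x => c i x - φ i) (W i) μ) :
    Integrable (cTransform c φ) μ :=
  hW.integrable_of_forall_integrableOn fun i =>
    (hc i).congr_fun (fun x hx => (cTransform_eq_of_forall_le (hmin i x hx)).symm)
      (hW.measurableSet i)

theorem sum_setIntegral_sub_eq_integral_cTransform (hW : IsMeasurablePartition W)
    (hmin : ∀ i, ∀ x ∈ W i, ∀ j, c i x - φ i ≤ c j x - φ j)
    (hc : ∀ i, IntegrableOn (fun x => c i x - φ i) (W i) μ) :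
    ∑ i, ∫ x in W i, (c i x - φ i) ∂μ = ∫ x, cTransform c φ x ∂μ := by
  rw [← hW.sum_setIntegral_eq_integral (hW.integrable_cTransform hmin hc)]
  exact Finset.sum_congr rfl fun i _ => setIntegral_congr_fun (hW.measurableSet i)
    fun x hx => (cTransform_eq_of_forall_le (hmin i x hx)).symm

theorem integral_cTransform_le_sum_setIntegral_sub (hW : IsMeasurablePartition W)
    (hψ : Integrable (cTransform c φ) μ)
    (hc : ∀ i, IntegrableOn (fun x => c i x - φ i) (W i) μ) :
    ∫ x, cTransform c φ x ∂μ ≤ ∑ i, ∫ x in W i, (c i x - φ i) ∂μ := by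
  rw [← hW.sum_setIntegral_eq_integral hψ]
  exact Finset.sum_le_sum fun i _ => setIntegral_mono_on hψ.integrableOn (hc i)
    (hW.measurableSet i) fun x _ => cTransform_le x i

end IsMeasurablePartition

/-- Cells defined by shifted-cost minimization achieve minimal total transport cost
among all measurable partitions with the same cell measures. -/
theorem laguerre_cells_minimize_cost {k : ℕ} {M : Type*} [MeasurableSpace M]
    (μ : Measure M) [IsFiniteMeasure μ]
    (W X : Fin k → Set M) (c : Fin k → M → ℝ) (φ : Fin k → ℝ)
    (hWmeas : ∀ i, MeasurableSet (W i)) (hXmeas : ∀ i, MeasurableSet (X i))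
    (hWdisj : Pairwise (Function.onFun Disjoint W))
    (hXdisj : Pairwise (Function.onFun Disjoint X))
    (hWcover : (⋃ i, W i) = Set.univ) (hXcover : (⋃ i, X i) = Set.univ)
    (hint : ∀ i, Integrable (c i) μ)
    (hmin : ∀ i, ∀ x ∈ W i, ∀ j, c i x - φ i ≤ c j x - φ j)
    (hμeq : ∀ i, μ (X i) = μ (W i)) :
    ∑ i : Fin k, ∫ x in W i, c i x ∂μ ≤ ∑ j : Fin k, ∫ x in X j, c j x ∂μ := by
  have hW : IsMeasurablePartition W := ⟨hWmeas, hWdisj, hWcover⟩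
  have hX : IsMeasurablePartition X := ⟨hXmeas, hXdisj, hXcover⟩
  have hshift : ∀ (s : Fin k → Set M) i, IntegrableOn (fun x => c i x - φ i) (s i) μ :=
    fun s i => ((hint i).sub (integrable_const _)).integrableOn
  have hdual : ∑ i, ∫ x in W i, (c i x - φ i) ∂μ ≤ ∑ j, ∫ x in X j, (c j x - φ j) ∂μ := by
    rw [hW.sum_setIntegral_sub_eq_integral_cTransform hmin (hshift W)]
    exact hX.integral_cTransform_le_sum_setIntegral_sub
      (hW.integrable_cTransform hmin (hshift W)) (hshift X)
  simp only [fun (s : Fin k → Set M) i =>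
    setIntegral_sub_const (hint i).integrableOn (measure_ne_top μ (s i)) (φ i),
    Finset.sum_sub_distrib, measureReal_def, hμeq] at hdual
  linarith
end
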